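/- arXiv:2209.03730 — 2 statements merged into one kernel-verified Lean document; each statement's English description precedes it below -/
import Mathlib

section
/- Let u be a binary vector of length n ≥ 1 and, for an integer k ≥ 1, let v_k be the concatenation of k copies of u (a binary vector of length k·n, with m(v_k) = k·m(u)). Then, as an identity of integers, (3^{m(u)} − 2^{n}) · P(v_k) = (3^{k·m(u)} − 2^{k·n}) · P(u). (Paper's Corollary 4.2.) -/
/-!
Reading a vector from the left, `P (a ++ b) = 3 ^ m(b) * P a + 2 ^ |a| * P b`. Hence
`P (v_{k+1}) = 3 ^ (k m) * P u + 2 ^ n * P (v_k)`, so `P (v_k)` is `P u` times the homogeneous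
geometric sum `Σ_{i<k} 3 ^ (i m) 2 ^ ((k-1-i) n)`, which `3 ^ m - 2 ^ n` telescopes to
`3 ^ (k m) - 2 ^ (k n)`.
-/

/-- The Collatz map `T`. -/
def collatzT (N : ℕ) : ℕ := if N % 2 = 0 then N / 2 else (3 * N + 1) / 2

/-- The parity vector of length `n` of `N`: entry `k` is `true` iff `T^[k] N` is odd. -/
def parityVec (N n : ℕ) : List Bool :=
  (List.range n).map (fun k => decide ((collatzT^[k] N) % 2 = 1))

/-- `m(v)`: the number of ones of a binary vector. -/
def mOnes (v : List Bool) : ℕ := v.count true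

/-- `P(v)`: the characteristic number of a binary vector,
`P(v) = Σ_{k=1}^{m} 3^(m-k) * 2^(j_k - 1)` where `j_1 < … < j_m` are the positions of ones. -/
def Pchar : List Bool → ℕ
  | [] => 0
  | e :: rest => (if e then 3 ^ mOnes rest else 0) + 2 * Pchar rest

theorem mOnes_append (a b : List Bool) : mOnes (a ++ b) = mOnes a + mOnes b :=
  List.count_append ..

theorem Pchar_append (a b : List Bool) :
    Pchar (a ++ b) = 3 ^ mOnes b * Pchar a + 2 ^ a.length * Pchar b := by
  induction a with
  | nil => simp [Pchar]
  | cons e rest ih => cases e <;> simp [Pchar, ih, mOnes_append, pow_add] <;> ring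

theorem mOnes_flatten_replicate (u : List Bool) (k : ℕ) :
    mOnes (List.replicate k u).flatten = k * mOnes u := by
  induction k with
  | zero => simp [mOnes]
  | succ k ih => rw [List.replicate_succ, List.flatten_cons, mOnes_append, ih]; ring

theorem Pchar_flatten_replicate_succ (u : List Bool) (k : ℕ) :
    Pchar (List.replicate (k + 1) u).flatten =
      3 ^ (k * mOnes u) * Pchar u + 2 ^ u.length * Pchar (List.replicate k u).flatten := by
  rw [List.replicate_succ, List.flatten_cons, Pchar_append, mOnes_flatten_replicate]

theorem stmt_8_general (u : List Bool) (k : ℕ) :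
    ((3 : ℤ) ^ mOnes u - 2 ^ u.length) *
        (Pchar ((List.replicate k u).flatten) : ℤ) =
      ((3 : ℤ) ^ (k * mOnes u) - 2 ^ (k * u.length)) * (Pchar u : ℤ) := by
  induction k with
  | zero => simp [Pchar]
  | succ k ih =>
    rw [Pchar_flatten_replicate_succ, add_one_mul, add_one_mul, pow_add, pow_add]
    push_cast
    linear_combination (2 : ℤ) ^ u.length * ih

/-- Paper's Corollary 4.2: for the concatenation v_k of k copies of u,
`(3^(m u) - 2^(n u)) * P v_k = (3^(k * m u) - 2^(k * n u)) * P u` in ℤ. -/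
theorem stmt_8 (u : List Bool) (hu : 1 ≤ u.length) (k : ℕ) (hk : 1 ≤ k) :
    ((3 : ℤ) ^ mOnes u - 2 ^ u.length) *
        (Pchar ((List.replicate k u).flatten) : ℤ) =
      ((3 : ℤ) ^ (k * mOnes u) - 2 ^ (k * u.length)) * (Pchar u : ℤ) :=
  stmt_8_general u k
end

section
/- Let n ≥ 1 and let v₁, v₂ be binary vectors of length n with m(v₁) = m(v₂). If x₁ and x₂ are positive integers whose parity vectors of length n equal v₁ and v₂ respectively, then 2^n divides the integer P(v₁)·x₂ − P(v₂)·x₁. (Paper's Theorem 4.7.) -/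
lemma two_mul_collatzT (x : ℕ) : 2 * collatzT x = 3 ^ (x % 2) * x + x % 2 := by
  unfold collatzT
  rcases Nat.mod_two_eq_zero_or_one x with h | h <;> simp [h] <;> omega

lemma parityVec_succ (x n : ℕ) :
    parityVec x (n + 1) = decide (x % 2 = 1) :: parityVec (collatzT x) n := by
  simp only [parityVec, List.range_succ_eq_map, List.map_cons, List.map_map,
    Function.iterate_zero_apply]
  rfl

lemma mOnes_cons (b : Bool) (v : List Bool) : mOnes (b :: v) = mOnes v + b.toNat := by
  cases b <;> simp [mOnes]

lemma Pchar_cons (b : Bool) (v : List Bool) :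
    Pchar (b :: v) = 3 ^ mOnes v * b.toNat + 2 * Pchar v := by
  cases b <;> simp [Pchar]

lemma two_pow_mul_iterate_collatzT (n x : ℕ) :
    2 ^ n * collatzT^[n] x = 3 ^ mOnes (parityVec x n) * x + Pchar (parityVec x n) := by
  induction n generalizing x with
  | zero => simp [parityVec, mOnes, Pchar]
  | succ n ih =>
    have hbit : (decide (x % 2 = 1)).toNat = x % 2 := by
      rcases Nat.mod_two_eq_zero_or_one x with h | h <;> simp [h]
    rw [parityVec_succ, mOnes_cons, Pchar_cons, hbit, Function.iterate_succ_apply]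
    calc 2 ^ (n + 1) * collatzT^[n] (collatzT x)
        = 2 * (2 ^ n * collatzT^[n] (collatzT x)) := by ring
      _ = 3 ^ mOnes (parityVec (collatzT x) n) * (2 * collatzT x)
            + 2 * Pchar (parityVec (collatzT x) n) := by rw [ih]; ring
      _ = _ := by rw [two_mul_collatzT]; ring

lemma dvd_sub_mul_of_eq_mul_add {R : Type*} [CommRing R] {d a b c x y p q : R}
    (ha : d * a = c * x + p) (hb : d * b = c * y + q) : d ∣ p * y - q * x :=
  ⟨a * y - b * x, by linear_combination x * hb - y * ha⟩

theorem stmt_10_general (n : ℕ) (v₁ v₂ : List Bool)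
    (hm : mOnes v₁ = mOnes v₂)
    (x₁ x₂ : ℕ)
    (hp₁ : parityVec x₁ n = v₁) (hp₂ : parityVec x₂ n = v₂) :
    (2 : ℤ) ^ n ∣ (Pchar v₁ : ℤ) * x₂ - (Pchar v₂ : ℤ) * x₁ := by
  have h₁ := two_pow_mul_iterate_collatzT n x₁
  have h₂ := two_pow_mul_iterate_collatzT n x₂
  rw [hp₁, hm] at h₁
  rw [hp₂] at h₂
  exact dvd_sub_mul_of_eq_mul_add (a := (collatzT^[n] x₁ : ℤ)) (b := (collatzT^[n] x₂ : ℤ))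
    (c := 3 ^ mOnes v₂) (by exact_mod_cast h₁) (by exact_mod_cast h₂)

/-- Paper's Theorem 4.7: if v₁, v₂ have the same length n and the same number of
ones, and x₁, x₂ realize them as parity vectors, then
`2^n ∣ P v₁ * x₂ - P v₂ * x₁` in ℤ. -/
theorem stmt_10 (n : ℕ) (hn : 1 ≤ n) (v₁ v₂ : List Bool)
    (h₁ : v₁.length = n) (h₂ : v₂.length = n) (hm : mOnes v₁ = mOnes v₂)
    (x₁ x₂ : ℕ) (hx₁ : 0 < x₁) (hx₂ : 0 < x₂)
    (hp₁ : parityVec x₁ n = v₁) (hp₂ : parityVec x₂ n = v₂) :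
    (2 : ℤ) ^ n ∣ (Pchar v₁ : ℤ) * x₂ - (Pchar v₂ : ℤ) * x₁ :=
  stmt_10_general n v₁ v₂ hm x₁ x₂ hp₁ hp₂
end
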